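/- The characteristic polynomial of the Laplacian of the star semigraph S³_{2,n} equals λ(λ − 1/2)^{n−1}(λ³ − ((n+17)/2)λ² + (19 + 3n)λ − (5n+15)/2). -/
import Mathlib


open Matrix Polynomial BigOperators

/-- The Laplacian of the star semigraph `S³_{2,n}` on `n+3` vertices: one size-3 full
edge `(v₂, v₁, v₃)` with middle vertex `v₁` (index 0), and `n` half edges `(v₁, v_k)`,
`k = 4, …, n+3`, in which `v₁` is a middle end vertex. -/
noncomputable def starLap (n : ℕ) : Matrix (Fin (n + 3)) (Fin (n + 3)) ℝ :=
  fun i j =>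
    if (i : ℕ) = 0 then
      (if (j : ℕ) = 0 then ((n : ℝ) + 4) / 2 else if (j : ℕ) ≤ 2 then -1 else -(1/2))
    else if (i : ℕ) ≤ 2 then
      (if (j : ℕ) = 0 then -1 else if j = i then 3 else if (j : ℕ) ≤ 2 then -2 else 0)
    else
      (if (j : ℕ) = 0 then -(1/2) else if j = i then 1/2 else 0)

noncomputable def Bmat (m : ℕ) : Matrix (Fin (m + 2)) (Fin (m + 2)) (Polynomial ℝ) :=
  fun i j =>
    if (i : ℕ) = 0 then
      (if (j : ℕ) = 0 then X - C 3 else if (j : ℕ) = 1 then C 2 else 0)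
    else if (i : ℕ) = 1 then
      (if (j : ℕ) = 0 then C 2 else if (j : ℕ) = 1 then X - C 3 else 0)
    else if (j : ℕ) = (i : ℕ) then X - C (1/2) else 0

lemma Bmat_sub (m : ℕ) :
    (Bmat (m + 1)).submatrix Fin.castSucc Fin.castSucc = Bmat m := by
  ext i j
  simp [Bmat, submatrix_apply]

lemma det_Bmat (m : ℕ) :
    (Bmat m).det = ((X - C 3)^2 - C 4) * (X - C ((1:ℝ)/2))^m := by
  induction m with
  | zero =>
      rw [show (Bmat 0).det = _ from det_fin_two (Bmat 0)]
      simp [Bmat, Fin.isValue]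
      have h : (C (2:ℝ))^2 = (C 4 : Polynomial ℝ) := by rw [← map_pow]; norm_num
      ring_nf
      rw [h]
  | succ m ih =>
      rw [det_succ_row (Bmat (m + 1)) (Fin.last (m + 2))]
      rw [Finset.sum_eq_single_of_mem (Fin.last (m + 2)) (Finset.mem_univ _)]
      · rw [Fin.succAbove_last, Bmat_sub, ih]
        have h1 : (Bmat (m + 1)) (Fin.last (m + 2)) (Fin.last (m + 2)) = X - C (1/2) := by
          simp [Bmat, Fin.last]
        rw [h1]
        have h2 : ((-1 : Polynomial ℝ)) ^ ((Fin.last (m+2) : ℕ) + (Fin.last (m+2) : ℕ)) = 1 := by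
          rw [← two_mul, pow_mul]
          norm_num
        rw [h2]
        ring
      · intro j _ hj
        have hj' : (j : ℕ) ≠ m + 2 := by
          intro h; exact hj (Fin.ext h)
        have : (Bmat (m + 1)) (Fin.last (m + 2)) j = 0 := by
          simp only [Bmat, Fin.val_last]
          rw [if_neg (by omega), if_neg (by omega), if_neg (by omega)]
        rw [this]; ring

noncomputable def Cmat (m : ℕ) (a : ℝ) : Matrix (Fin (m + 3)) (Fin (m + 3)) (Polynomial ℝ) :=
  fun i j =>
    if (i : ℕ) = 0 then
      (if (j : ℕ) = 0 then X - C a else if (j : ℕ) ≤ 2 then C 1 else C (1/2))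
    else if (i : ℕ) ≤ 2 then
      (if (j : ℕ) = 0 then C 1 else if (j : ℕ) = (i : ℕ) then X - C 3
       else if (j : ℕ) ≤ 2 then C 2 else 0)
    else
      (if (j : ℕ) = 0 then C (1/2) else if (j : ℕ) = (i : ℕ) then X - C (1/2) else 0)

lemma charmatrix_starLap (n : ℕ) :
    charmatrix (starLap n) = Cmat n (((n : ℝ) + 4) / 2) := by
  apply Matrix.ext
  intro i j
  by_cases hij : i = j
  · subst hij
    rw [charmatrix_apply_eq]
    simp only [starLap, Cmat]
    by_cases h0 : (i : ℕ) = 0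
    · simp [h0]
    · by_cases h2 : (i : ℕ) ≤ 2 <;> simp [h0, h2]
  · rw [charmatrix_apply_ne _ _ _ hij]
    have hvij : (i : ℕ) ≠ (j : ℕ) := fun h => hij (Fin.ext h)
    simp only [starLap, Cmat]
    by_cases hi0 : (i : ℕ) = 0
    · by_cases hj0 : (j : ℕ) = 0
      · omega
      · by_cases hj2 : (j : ℕ) ≤ 2
        · rw [if_pos hi0, if_pos hi0, if_neg hj0, if_neg hj0, if_pos hj2, if_pos hj2]
          norm_num
        · rw [if_pos hi0, if_pos hi0, if_neg hj0, if_neg hj0, if_neg hj2, if_neg hj2]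
          norm_num
    · by_cases hi2 : (i : ℕ) ≤ 2
      · rw [if_neg hi0, if_neg hi0, if_pos hi2, if_pos hi2]
        by_cases hj0 : (j : ℕ) = 0
        · rw [if_pos hj0, if_pos hj0]; norm_num
        · rw [if_neg hj0, if_neg hj0, if_neg (show ¬ j = i from fun h => hij h.symm),
            if_neg hvij.symm]
          by_cases hj2 : (j : ℕ) ≤ 2
          · rw [if_pos hj2, if_pos hj2]; norm_num
          · rw [if_neg hj2, if_neg hj2]; norm_num
      · rw [if_neg hi0, if_neg hi0, if_neg hi2, if_neg hi2]
        by_cases hj0 : (j : ℕ) = 0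
        · rw [if_pos hj0, if_pos hj0]; norm_num
        · rw [if_neg hj0, if_neg hj0, if_neg (show ¬ j = i from fun h => hij h.symm),
            if_neg hvij.symm]
          norm_num

lemma Cmat_sub_last (m : ℕ) (a : ℝ) :
    (Cmat (m + 1) a).submatrix Fin.castSucc Fin.castSucc = Cmat m a := by
  ext i j
  simp [Cmat, submatrix_apply]

lemma Cmat_sub_N' (m : ℕ) (a : ℝ) :
    (((Cmat (m + 1) a).submatrix Fin.castSucc Fin.succ).submatrix Fin.succ Fin.castSucc)
      = Bmat m := by
  apply Matrix.ext
  intro i j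
  simp only [submatrix_apply, Cmat, Bmat, Fin.coe_castSucc, Fin.val_succ]
  split_ifs <;> first | rfl | omega | exact (‹False›).elim

lemma det_N (m : ℕ) (a : ℝ) :
    ((Cmat (m + 1) a).submatrix Fin.castSucc Fin.succ).det
      = (-1 : Polynomial ℝ)^(m + 2) * C (1/2) * (((X - C 3)^2 - C 4) * (X - C ((1:ℝ)/2))^m) := by
  rw [det_succ_column ((Cmat (m + 1) a).submatrix Fin.castSucc Fin.succ) (Fin.last (m + 2))]
  rw [Finset.sum_eq_single_of_mem (0 : Fin (m + 3)) (Finset.mem_univ _)]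
  · rw [show ((0 : Fin (m+3)).succAbove) = Fin.succ from Fin.succAbove_zero,
      show ((Fin.last (m+2)).succAbove) = Fin.castSucc from Fin.succAbove_last,
      Cmat_sub_N', det_Bmat]
    have h1 : ((Cmat (m + 1) a).submatrix Fin.castSucc Fin.succ) 0 (Fin.last (m + 2))
        = C (1/2) := by
      simp only [submatrix_apply, Cmat, Fin.coe_castSucc, Fin.val_succ, Fin.val_last,
        Fin.val_zero]
      split_ifs <;> first | rfl | omega | exact (‹False›).elim
    rw [h1]
    simp only [Fin.val_zero, Fin.val_last, zero_add]
  · intro i _ hi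
    have hvi : (i : ℕ) ≠ 0 := fun h => hi (Fin.ext h)
    have h0 : ((Cmat (m + 1) a).submatrix Fin.castSucc Fin.succ) i (Fin.last (m + 2)) = 0 := by
      simp only [submatrix_apply, Cmat, Fin.coe_castSucc, Fin.val_succ, Fin.val_last]
      have hle : (i : ℕ) ≤ m + 2 := Nat.lt_succ_iff.mp i.isLt
      split_ifs <;> first | rfl | omega | exact (‹False›).elim
    rw [h0]; ring

lemma det_Cmat_succ (m : ℕ) (a : ℝ) :
    (Cmat (m + 1) a).det = (X - C ((1:ℝ)/2)) * (Cmat m a).det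
      - C (1/4) * (((X - C 3)^2 - C 4) * (X - C ((1:ℝ)/2))^m) := by
  rw [det_succ_row (Cmat (m + 1) a) (Fin.last (m + 3))]
  have hz : ∀ j ∈ (Finset.univ : Finset (Fin (m + 4))),
      j ∉ ({0, Fin.last (m + 3)} : Finset (Fin (m + 4))) →
      (-1 : Polynomial ℝ)^((Fin.last (m+3) : ℕ) + (j : ℕ)) * (Cmat (m + 1) a) (Fin.last (m+3)) j *
        ((Cmat (m + 1) a).submatrix (Fin.last (m+3)).succAbove j.succAbove).det = 0 := by
    intro j _ hj
    simp only [Finset.mem_insert, Finset.mem_singleton] at hj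
    push_neg at hj
    have hj0 : (j : ℕ) ≠ 0 := fun h => hj.1 (Fin.ext h)
    have hjl : (j : ℕ) ≠ m + 3 := fun h => hj.2 (Fin.ext h)
    have h0 : (Cmat (m + 1) a) (Fin.last (m+3)) j = 0 := by
      simp only [Cmat, Fin.val_last]
      split_ifs <;> first | rfl | omega | exact (‹False›).elim
    rw [h0]; ring
  rw [← Finset.sum_subset (Finset.subset_univ _) hz]
  rw [Finset.sum_pair (show (0 : Fin (m + 4)) ≠ Fin.last (m + 3) from
    fun h => by simpa using congrArg (Fin.val) h)]
  rw [show ((0 : Fin (m+4)).succAbove) = Fin.succ from Fin.succAbove_zero,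
    show ((Fin.last (m+3)).succAbove) = Fin.castSucc from Fin.succAbove_last]
  rw [Cmat_sub_last, det_N]
  have e1 : (Cmat (m + 1) a) (Fin.last (m+3)) (0 : Fin (m + 4)) = C (1/2) := by
    simp only [Cmat, Fin.val_last, Fin.val_zero]
    split_ifs <;> first | rfl | omega | exact (‹False›).elim
  have e2 : (Cmat (m + 1) a) (Fin.last (m+3)) (Fin.last (m+3)) = X - C (1/2) := by
    simp only [Cmat, Fin.val_last]
    split_ifs <;> first | rfl | omega | exact (‹False›).elim
  rw [e1, e2]
  simp only [Fin.val_last, Fin.val_zero, add_zero]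
  have hs : (-1 : Polynomial ℝ)^(m + 3) * ((-1 : Polynomial ℝ)^(m + 2)) = -1 := by
    rw [← pow_add]
    exact Odd.neg_one_pow ⟨m + 2, by ring⟩
  have hc : (C ((1:ℝ)/2) : Polynomial ℝ) * C ((1:ℝ)/2) = C (1/4) := by
    rw [← C_mul]; norm_num
  have h4 : ((-1 : Polynomial ℝ)) ^ ((m + 3) + (m + 3)) = 1 := by
    rw [← two_mul, pow_mul]; norm_num
  rw [h4]
  calc (-1 : Polynomial ℝ) ^ (m + 3) * C (1/2) *
        ((-1 : Polynomial ℝ)^(m + 2) * C (1/2) * (((X - C 3)^2 - C 4) * (X - C ((1:ℝ)/2))^m))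
        + 1 * (X - C (1/2)) * (Cmat m a).det
      = ((-1 : Polynomial ℝ)^(m + 3) * ((-1 : Polynomial ℝ)^(m + 2))) *
          ((C ((1:ℝ)/2) : Polynomial ℝ) * C ((1:ℝ)/2)) *
          (((X - C 3)^2 - C 4) * (X - C ((1:ℝ)/2))^m)
        + (X - C (1/2)) * (Cmat m a).det := by ring
    _ = _ := by rw [hs, hc]; ring

lemma det_Cmat0 (a : ℝ) :
    (Cmat 0 a).det = (X - C a) * ((X - C 3)^2 - C 4) - C 2 * X + C 10 := by
  rw [show (Cmat 0 a).det = _ from det_fin_three (Cmat 0 a)]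
  simp only [Cmat, Fin.isValue]
  norm_num
  apply Polynomial.funext
  intro x
  simp only [eval_mul, eval_add, eval_sub, eval_pow, eval_X, eval_C, eval_neg, eval_ofNat,
    eval_one]
  ring

lemma det_Cmat (m : ℕ) (a : ℝ) :
    (Cmat (m + 1) a).det = (X - C ((1:ℝ)/2))^m *
      ((X - C ((1:ℝ)/2)) * (Cmat 0 a).det
        - C ((m:ℝ) + 1) * C (1/4) * ((X - C 3)^2 - C 4)) := by
  induction m with
  | zero =>
      rw [det_Cmat_succ]
      norm_num
  | succ m ih =>
      rw [det_Cmat_succ, ih]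
      have hc : (C (((m + 1 : ℕ) : ℝ) + 1) : Polynomial ℝ) = C ((m : ℝ) + 1) + 1 := by
        push_cast
        rw [C_add, C_1]
      rw [hc]
      ring

/-- The characteristic polynomial of the Laplacian of the star semigraph
`S³_{2,n}` is `λ (λ - 1/2)^{n-1} (λ³ - ((n+17)/2) λ² + (19 + 3n) λ - (5n+15)/2)`. -/
theorem stmt12 (n : ℕ) (hn : 1 ≤ n) :
    (starLap n).charpoly =
      X * (X - C ((1 : ℝ)/2))^(n - 1) *
        (X^3 - C (((n : ℝ) + 17)/2) * X^2 + C (19 + 3*(n : ℝ)) * X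
          - C ((5*(n : ℝ) + 15)/2)) := by
  obtain ⟨m, rfl⟩ : ∃ m, n = m + 1 := ⟨n - 1, by omega⟩
  unfold Matrix.charpoly
  rw [charmatrix_starLap, det_Cmat, det_Cmat0]
  simp only [Nat.add_sub_cancel]
  have key :
      (X - C ((1:ℝ)/2)) *
          ((X - C ((((m+1:ℕ) : ℝ) + 4) / 2)) * ((X - C 3)^2 - C 4) - C 2 * X + C 10)
        - C ((m : ℝ) + 1) * C (1/4) * ((X - C 3)^2 - C 4)
      = X * (X^3 - C ((((m+1:ℕ) : ℝ) + 17)/2) * X^2 + C (19 + 3*((m+1:ℕ) : ℝ)) * X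
          - C ((5*((m+1:ℕ) : ℝ) + 15)/2)) := by
    apply Polynomial.funext
    intro x
    simp only [eval_mul, eval_add, eval_sub, eval_pow, eval_X, eval_C, eval_neg, eval_ofNat,
      eval_one]
    push_cast
    ring
  rw [key]
  ring
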